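/- For every n ≥ 1, the recurrence coefficient a_n = ⟨f_{n+1}, s_n⟩_S/‖s_n‖_S² satisfies |a_n| ≤ min(C, χ^{−1}·C³). -/

import Mathlib

open Filter RealInnerProductSpace

variable {H : Type*} [NormedAddCommGroup H] [InnerProductSpace ℝ H]

/-- `Wlt P n` is the span of `P 0, …, P (n-1)`; thus `Wlt P 0 = ⊥ = W_{-1}` and
`Wlt P (n+1)` is the space `W_n = span{P_0, …, P_n}`. -/
def Wlt (P : ℕ → H) (n : ℕ) : Submodule ℝ H := Submodule.span ℝ (P '' Set.Iio n)

/-- `Wtot P` is the space `W = ⋃ₙ Wₙ` of all polynomials. -/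
def Wtot (P : ℕ → H) : Submodule ℝ H := Submodule.span ℝ (Set.range P)

/-- The Sobolev inner product `⟨f, g⟩_S = ⟨f, g⟩₂ + χ⟨Δf, Δg⟩₂`. -/
noncomputable def innerS (Δ : H →ₗ[ℝ] H) (χ : ℝ) (f g : H) : ℝ :=
  ⟪ f, g ⟫ + χ * ⟪ Δ f, Δ g ⟫

/-- The Sobolev norm `‖f‖_S = √(‖f‖₂² + χ‖Δf‖₂²)`. -/
noncomputable def normS (Δ : H →ₗ[ℝ] H) (χ : ℝ) (f : H) : ℝ :=
  Real.sqrt (‖f‖ ^ 2 + χ * ‖Δ f‖ ^ 2)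

/-!
The numerator `⟨𝒢pₙ, sₙ⟩_S` reduces to `⟨𝒢pₙ, sₙ⟩₂`, because `Δ𝒢pₙ = pₙ` is orthogonal to
`Δsₙ ∈ W_{n-1}`. Cauchy–Schwarz and `‖pₙ‖₂ ≤ ‖sₙ‖₂` (the monic `pₙ` is the orthogonal projection
of `sₙ` onto the line through it) bound it by `C‖sₙ‖₂²`. Moreover `‖sₙ‖₂ ≤ C‖Δsₙ‖₂`, since
`sₙ` differs from `𝒢Δsₙ` by a constant. Hence `‖sₙ‖_S² = ‖sₙ‖₂² + χ‖Δsₙ‖₂²` dominates both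
`‖sₙ‖₂²` and `χC⁻²‖sₙ‖₂²`.
-/

lemma norm_le_norm_of_inner_sub_eq_zero {E : Type*} [NormedAddCommGroup E] [InnerProductSpace ℝ E]
    {x y : E} (h : ⟪x, y - x⟫ = 0) : ‖x‖ ≤ ‖y‖ := by
  have hy : ‖y‖ ^ 2 = ‖x‖ ^ 2 + ‖y - x‖ ^ 2 := by
    rw [← add_sub_cancel x y, norm_add_sq_real, h, add_sub_cancel_left]
    ring
  exact (pow_le_pow_iff_left₀ (norm_nonneg x) (norm_nonneg y) two_ne_zero).mp
    (by nlinarith [sq_nonneg ‖y - x‖])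

lemma abs_div_le_min_of_le_mul_sq {a x y C χ : ℝ} (hC : 0 ≤ C) (hχ : 0 < χ) (hx : 0 ≤ x)
    (ha : |a| ≤ C * x ^ 2) (hxy : x ≤ C * y) :
    |a / (x ^ 2 + χ * y ^ 2)| ≤ min C (χ⁻¹ * C ^ 3) := by
  rcases (by positivity : (0 : ℝ) ≤ x ^ 2 + χ * y ^ 2).eq_or_lt with hD | hD
  · rw [← hD, div_zero, abs_zero]
    exact le_min hC (by positivity)
  have hCx : C * x ^ 2 ≤ C ^ 3 * y ^ 2 := by
    have := mul_le_mul_of_nonneg_left (pow_le_pow_left₀ hx hxy 2) hC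
    linarith
  rw [abs_div, abs_of_pos hD]
  refine le_min ?_ ?_ <;> rw [div_le_iff₀ hD]
  · nlinarith [mul_nonneg hC (mul_nonneg hχ.le (sq_nonneg y))]
  · calc |a| ≤ C ^ 3 * y ^ 2 := ha.trans hCx
      _ = χ⁻¹ * C ^ 3 * (χ * y ^ 2) := by field_simp
      _ ≤ χ⁻¹ * C ^ 3 * (x ^ 2 + χ * y ^ 2) := by gcongr; nlinarith [sq_nonneg x]

section Polynomials

variable (P : ℕ → H)

lemma Wlt_le_Wtot (n : ℕ) : Wlt P n ≤ Wtot P :=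
  Submodule.span_mono (Set.image_subset_range _ _)

lemma Wlt_mono {m n : ℕ} (h : m ≤ n) : Wlt P m ≤ Wlt P n :=
  Submodule.span_mono (Set.image_mono (Set.Iio_subset_Iio h))

lemma apply_mem_Wlt {k n : ℕ} (h : k < n) : P k ∈ Wlt P n :=
  Submodule.subset_span ⟨k, h, rfl⟩

lemma mem_Wlt_succ_of_sub_mem {q : H} {n : ℕ} (h : q - P n ∈ Wlt P n) : q ∈ Wlt P (n + 1) := by
  simpa using Submodule.add_mem _ (Wlt_mono P n.le_succ h) (apply_mem_Wlt P n.lt_succ_self)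

lemma Wlt_succ_eq_span_insert (n : ℕ) :
    Wlt P (n + 1) = Submodule.span ℝ (insert (P n) (P '' Set.Iio n)) := by
  rw [Wlt, ← Set.image_insert_eq, ← Order.Iio_succ_eq_insert, Order.succ_eq_add_one]

variable {P} (Δ : H →ₗ[ℝ] H)

lemma map_Wlt_succ_le (hΔ0 : Δ (P 0) = 0) (hΔsucc : ∀ n, Δ (P (n + 1)) = P n) (n : ℕ) :
    (Wlt P (n + 1)).map Δ ≤ Wlt P n := by
  rw [Wlt, Submodule.map_span_le]
  rintro _ ⟨_ | k, hk, rfl⟩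
  · simp [hΔ0]
  · rw [hΔsucc]
    exact apply_mem_Wlt P (by simpa using hk)

lemma mem_Wlt_one_of_map_eq_zero (hP : LinearIndependent ℝ P)
    (hΔ0 : Δ (P 0) = 0) (hΔsucc : ∀ n, Δ (P (n + 1)) = P n) :
    ∀ m, ∀ u ∈ Wlt P (m + 1), Δ u = 0 → u ∈ Wlt P 1 := by
  intro m
  induction m with
  | zero => exact fun u hu _ => hu
  | succ m ih =>
    intro u hu hΔu
    rw [Wlt_succ_eq_span_insert, Submodule.mem_span_insert] at hu
    obtain ⟨c, z, hz, rfl⟩ := hu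
    rw [map_add, map_smul, hΔsucc] at hΔu
    -- `c • P m = -Δ z` lies in `Wlt P m`, which does not contain `P m`.
    have hc : c = 0 := by
      by_contra hc
      have hPm : P m ∈ Wlt P m := by
        rw [← (Wlt P m).smul_mem_iff hc, eq_neg_of_add_eq_zero_left hΔu]
        exact neg_mem (map_Wlt_succ_le Δ hΔ0 hΔsucc m ⟨z, hz, rfl⟩)
      exact hP.notMem_span_image (by simp) hPm
    subst hc
    rw [zero_smul, zero_add] at hΔu ⊢
    exact ih z hz hΔu

end Polynomials

lemma innerS_eq_inner_of_inner_map_eq_zero {Δ : H →ₗ[ℝ] H} {χ : ℝ} {f g : H}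
    (h : ⟪Δ f, Δ g⟫ = 0) : innerS Δ χ f g = ⟪f, g⟫ := by
  rw [innerS, h, mul_zero, add_zero]

/-- `G (Δ s) - s` is a constant killed by `Δ`, so its Sobolev orthogonality to `s` is
orthogonality in `H`. -/
lemma norm_le_mul_norm_map_of_innerS_orthogonal {P : ℕ → H} (hP : LinearIndependent ℝ P)
    {Δ G : H →ₗ[ℝ] H} (hΔ0 : Δ (P 0) = 0) (hΔsucc : ∀ n, Δ (P (n + 1)) = P n)
    (hGinv : ∀ u ∈ Wtot P, Δ (G u) = u)
    (hGmap : ∀ n, ∀ u ∈ Wlt P (n + 1), G u ∈ Wlt P (n + 2))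
    {C : ℝ} (hGbound : ∀ u ∈ Wtot P, ‖G u‖ ≤ C * ‖u‖) {χ : ℝ} {n : ℕ} (hn : 1 ≤ n)
    {s : H} (hs : s ∈ Wlt P (n + 1)) (hortho : ∀ w ∈ Wlt P n, innerS Δ χ s w = 0) :
    ‖s‖ ≤ C * ‖Δ s‖ := by
  have hΔs : Δ s ∈ Wlt P n := map_Wlt_succ_le Δ hΔ0 hΔsucc n ⟨s, hs, rfl⟩
  have hker : Δ (G (Δ s) - s) = 0 := by
    rw [map_sub, hGinv _ (Wlt_le_Wtot P n hΔs), sub_self]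
  have hconst : G (Δ s) - s ∈ Wlt P 1 :=
    mem_Wlt_one_of_map_eq_zero Δ hP hΔ0 hΔsucc (n + 1) _
      (sub_mem (hGmap n _ (Wlt_mono P n.le_succ hΔs)) (Wlt_mono P (n + 1).le_succ hs)) hker
  have horth : ⟪s, G (Δ s) - s⟫ = 0 := by
    rw [← innerS_eq_inner_of_inner_map_eq_zero (χ := χ) (by rw [hker, inner_zero_right])]
    exact hortho _ (Wlt_mono P hn hconst)
  calc ‖s‖ ≤ ‖G (Δ s)‖ := norm_le_norm_of_inner_sub_eq_zero horth
    _ ≤ C * ‖Δ s‖ := hGbound _ (Wlt_le_Wtot P n hΔs)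

theorem statement8_general
    (P : ℕ → H) (hP : LinearIndependent ℝ P)
    (Δ G : H →ₗ[ℝ] H)
    (hΔ0 : Δ (P 0) = 0) (hΔsucc : ∀ n, Δ (P (n + 1)) = P n)
    (hGinv : ∀ u ∈ Wtot P, Δ (G u) = u)
    (hGmap : ∀ n, ∀ u ∈ Wlt P (n + 1), G u ∈ Wlt P (n + 2))
    (C : ℝ) (hC : 0 < C)
    (hGbound : ∀ u ∈ Wtot P, ‖G u‖ ≤ C * ‖u‖)
    (χ : ℝ) (hχ : 0 < χ)
    (p : ℕ → H)
    (hpmonic : ∀ n, p n - P n ∈ Wlt P n)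
    (hportho : ∀ n, ∀ w ∈ Wlt P n, ⟪ p n, w ⟫ = 0)
    (s : ℕ → H)
    (hsmonic : ∀ n, s n - P n ∈ Wlt P n)
    (hsortho : ∀ n, ∀ w ∈ Wlt P n, innerS Δ χ (s n) w = 0)
    : ∀ n, 1 ≤ n →
      |innerS Δ χ (G (p n)) (s n) / (‖s n‖ ^ 2 + χ * ‖Δ (s n)‖ ^ 2)| ≤
        min C (χ⁻¹ * C ^ 3) := by
  intro n hn
  have hp : p n ∈ Wtot P := Wlt_le_Wtot P _ (mem_Wlt_succ_of_sub_mem P (hpmonic n))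
  have hs : s n ∈ Wlt P (n + 1) := mem_Wlt_succ_of_sub_mem P (hsmonic n)
  have hΔs : Δ (s n) ∈ Wlt P n := map_Wlt_succ_le Δ hΔ0 hΔsucc n ⟨s n, hs, rfl⟩
  have hnum : innerS Δ χ (G (p n)) (s n) = ⟪G (p n), s n⟫ :=
    innerS_eq_inner_of_inner_map_eq_zero (by rw [hGinv _ hp]; exact hportho n _ hΔs)
  have hps : ‖p n‖ ≤ ‖s n‖ :=
    norm_le_norm_of_inner_sub_eq_zero
      (hportho n _ (by simpa using sub_mem (hsmonic n) (hpmonic n)))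
  have hA : |⟪G (p n), s n⟫| ≤ C * ‖s n‖ ^ 2 :=
    calc |⟪G (p n), s n⟫| ≤ ‖G (p n)‖ * ‖s n‖ := abs_real_inner_le_norm _ _
      _ ≤ C * ‖p n‖ * ‖s n‖ := by gcongr; exact hGbound _ hp
      _ ≤ C * ‖s n‖ ^ 2 := by rw [sq, ← mul_assoc]; gcongr
  rw [hnum]
  exact abs_div_le_min_of_le_mul_sq hC.le hχ (norm_nonneg _) hA
    (norm_le_mul_norm_map_of_innerS_orthogonal hP hΔ0 hΔsucc hGinv hGmap hGbound hn hs
      (hsortho n))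

/-- For `n ≥ 1`, `|a_n| = |⟨f_{n+1}, s_n⟩_S/‖s_n‖_S²| ≤ min(C, χ⁻¹C³)`. -/
theorem statement8
    (P : ℕ → H) (hP : LinearIndependent ℝ P)
    (Δ G : H →ₗ[ℝ] H)
    (hΔ0 : Δ (P 0) = 0) (hΔsucc : ∀ n, Δ (P (n + 1)) = P n)
    (hGsym : ∀ u ∈ Wtot P, ∀ v ∈ Wtot P, ⟪ G u, v ⟫ = ⟪ u, G v ⟫)
    (hGinv : ∀ u ∈ Wtot P, Δ (G u) = u)
    (hGmap : ∀ n, ∀ u ∈ Wlt P (n + 1), G u ∈ Wlt P (n + 2))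
    (C : ℝ) (hC : 0 < C)
    (hGbound : ∀ u ∈ Wtot P, ‖G u‖ ≤ C * ‖u‖)
    (χ : ℝ) (hχ : 0 < χ)
    (p : ℕ → H)
    (hpmonic : ∀ n, p n - P n ∈ Wlt P n)
    (hportho : ∀ n, ∀ w ∈ Wlt P n, ⟪ p n, w ⟫ = 0)
    (s : ℕ → H)
    (hsmonic : ∀ n, s n - P n ∈ Wlt P n)
    (hsortho : ∀ n, ∀ w ∈ Wlt P n, innerS Δ χ (s n) w = 0)
    : ∀ n, 1 ≤ n →
      |innerS Δ χ (G (p n)) (s n) / (‖s n‖ ^ 2 + χ * ‖Δ (s n)‖ ^ 2)| ≤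
        min C (χ⁻¹ * C ^ 3) :=
  statement8_general P hP Δ G hΔ0 hΔsucc hGinv hGmap C hC hGbound χ hχ p hpmonic hportho s hsmonic
    hsortho
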